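/- If W ⊆ ℂ⁴ is a 2-dimensional complex subspace with j̃(W) = W, then the projective line ℙ(W) is a fiber of the twistor projection: there exists q ∈ ℍℙ¹ such that ℙ(W) = π⁻¹(q). -/

import Mathlib

/-- The conjugate-linear map `j̃ : ℂ⁴ → ℂ⁴`,
`j̃(z₀,z₁,z₂,z₃) = (−conj z₁, conj z₀, −conj z₃, conj z₂)`,
inducing the fixed-point-free anti-holomorphic involution `j` on `ℂℙ³`. -/
noncomputable def jt (z : Fin 4 → ℂ) : Fin 4 → ℂ :=
  ![-(starRingEnd ℂ) (z 1), (starRingEnd ℂ) (z 0), -(starRingEnd ℂ) (z 3), (starRingEnd ℂ) (z 2)]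

lemma jt_ne_zero {z : Fin 4 → ℂ} (hz : z ≠ 0) : jt z ≠ 0 := by
  intro h
  apply hz
  have h0 := congrFun h 0
  have h1 := congrFun h 1
  have h2 := congrFun h 2
  have h3 := congrFun h 3
  simp [jt] at h0 h1 h2 h3
  funext i
  fin_cases i <;> simp [h0, h1, h2, h3]

/-- The embedding `ℂ → ℍ` identifying `ℂ` with the subfield of `ℍ` spanned by `1` and `i`. -/
noncomputable def toQ (z : ℂ) : Quaternion ℝ := ⟨z.re, z.im, 0, 0⟩

/-- The imaginary unit `j ∈ ℍ`. -/
noncomputable def qJ : Quaternion ℝ := ⟨0, 0, 1, 0⟩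

lemma toQ_add_mul (a b : ℂ) :
    toQ a + toQ b * qJ = (⟨a.re, a.im, b.re, b.im⟩ : Quaternion ℝ) := by
  ext <;> (simp only [Quaternion.re_add, Quaternion.imI_add, Quaternion.imJ_add, Quaternion.imK_add,
    Quaternion.re_mul, Quaternion.imI_mul, Quaternion.imJ_mul, Quaternion.imK_mul]; simp [toQ, qJ])

/-- The vector-level twistor projection `(z₀,z₁,z₂,z₃) ↦ (z₀+z₁j, z₂+z₃j) ∈ ℍ²`. -/
noncomputable def piv (z : Fin 4 → ℂ) : Fin 2 → Quaternion ℝ :=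
  ![toQ (z 0) + toQ (z 1) * qJ, toQ (z 2) + toQ (z 3) * qJ]

lemma piv_ne_zero {z : Fin 4 → ℂ} (hz : z ≠ 0) : piv z ≠ 0 := by
  intro h
  apply hz
  have h0 := congrFun h 0
  have h1 := congrFun h 1
  simp only [piv, toQ_add_mul, Matrix.cons_val_zero, Matrix.cons_val_one, Matrix.head_cons,
    Pi.zero_apply] at h0 h1
  rw [Quaternion.ext_iff] at h0 h1
  simp at h0 h1
  funext i
  fin_cases i <;> apply Complex.ext <;> simp [h0.1, h0.2.1, h0.2.2.1, h0.2.2.2,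
    h1.1, h1.2.1, h1.2.2.1, h1.2.2.2] <;> rfl

/-- The twistor projection `π : ℂℙ³ → ℍℙ¹`, `π[z₀,z₁,z₂,z₃] = [z₀+z₁j, z₂+z₃j]`,
where `ℍℙ¹` is the projectivization of `ℍ²` as a left `ℍ`-module. -/
noncomputable def twistorProj (x : Projectivization ℂ (Fin 4 → ℂ)) :
    Projectivization (Quaternion ℝ) (Fin 2 → Quaternion ℝ) :=
  Projectivization.mk (Quaternion ℝ) (piv x.rep) (piv_ne_zero x.rep_nonzero)

/-- The projectivization `ℙ(W) ⊆ ℂℙ³` of a complex subspace `W ⊆ ℂ⁴`: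
the set of points of `ℂℙ³` whose representatives lie in `W`. -/
def projSet (W : Submodule ℂ (Fin 4 → ℂ)) : Set (Projectivization ℂ (Fin 4 → ℂ)) :=
  {x | x.rep ∈ W}

/-!
Writing `q = a + b j` identifies `ℍ` with `ℂ ⊕ ℂ j`, so the vector-level twistor map
`piv : ℂ⁴ → ℍ²` is a bijection which is `ℂ`-linear for left multiplication by `ℂ ⊂ ℍ` and turns
`j̃` into left multiplication by `j`. Hence for `w ≠ 0` it maps the complex span of `w` and `j̃ w`
onto the quaternionic line `ℍ · piv w`. A `j̃`-stable complex plane `W` is such a span, so its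
points are exactly those sent by `π` to `[piv w]`.
-/

open scoped Quaternion

@[simp] lemma toQ_re (z : ℂ) : (toQ z).re = z.re := rfl
@[simp] lemma toQ_imI (z : ℂ) : (toQ z).imI = z.im := rfl
@[simp] lemma toQ_imJ (z : ℂ) : (toQ z).imJ = 0 := rfl
@[simp] lemma toQ_imK (z : ℂ) : (toQ z).imK = 0 := rfl
@[simp] lemma qJ_re : qJ.re = 0 := rfl
@[simp] lemma qJ_imI : qJ.imI = 0 := rfl
@[simp] lemma qJ_imJ : qJ.imJ = 1 := rfl
@[simp] lemma qJ_imK : qJ.imK = 0 := rfl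

lemma exists_toQ_add_toQ_mul_qJ (q : Quaternion ℝ) : ∃ a b : ℂ, toQ a + toQ b * qJ = q :=
  ⟨⟨q.re, q.imI⟩, ⟨q.imJ, q.imK⟩, toQ_add_mul _ _⟩

lemma toQ_add_toQ_mul_qJ_eq_zero_iff {a b : ℂ} :
    toQ a + toQ b * qJ = 0 ↔ a = 0 ∧ b = 0 := by
  simp [Quaternion.ext_iff, Complex.ext_iff, and_assoc]

lemma piv_injective : Function.Injective piv := by
  intro z z' h
  have h0 := congrFun h 0
  have h1 := congrFun h 1
  simp [piv, Quaternion.ext_iff] at h0 h1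
  funext i
  fin_cases i <;> apply Complex.ext <;> simp [h0, h1]

lemma piv_zero : piv 0 = 0 := by
  funext i; fin_cases i <;> ext <;> simp [piv]

lemma piv_add (z z' : Fin 4 → ℂ) : piv (z + z') = piv z + piv z' := by
  funext i; fin_cases i <;> ext <;> simp [piv]

lemma piv_smul (a : ℂ) (z : Fin 4 → ℂ) : piv (a • z) = toQ a • piv z := by
  funext i; fin_cases i <;> ext <;> simp [piv]

lemma piv_jt (z : Fin 4 → ℂ) : piv (jt z) = qJ • piv z := by
  funext i; fin_cases i <;> ext <;> simp [piv, jt]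

lemma piv_smul_add_smul_jt (a b : ℂ) (w : Fin 4 → ℂ) :
    piv (a • w + b • jt w) = (toQ a + toQ b * qJ) • piv w := by
  rw [piv_add, piv_smul, piv_smul, piv_jt, add_smul, mul_smul]

lemma linearIndependent_pair_jt {w : Fin 4 → ℂ} (hw : w ≠ 0) :
    LinearIndependent ℂ ![w, jt w] := by
  refine LinearIndependent.pair_iff.2 fun a b hab => ?_
  have hq : (toQ a + toQ b * qJ) • piv w = 0 := by
    rw [← piv_smul_add_smul_jt, hab, piv_zero]
  exact toQ_add_toQ_mul_qJ_eq_zero_iff.1 ((smul_eq_zero.1 hq).resolve_right (piv_ne_zero hw))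

lemma span_pair_jt_eq {W : Submodule ℂ (Fin 4 → ℂ)} (hW : Module.finrank ℂ W = 2)
    (hj : ∀ z ∈ W, jt z ∈ W) {w : Fin 4 → ℂ} (hwW : w ∈ W) (hw : w ≠ 0) :
    Submodule.span ℂ {w, jt w} = W := by
  refine Submodule.eq_of_le_of_finrank_eq ?_ ?_
  · rw [Submodule.span_le]
    rintro x (rfl | rfl)
    exacts [hwW, hj w hwW]
  · rw [hW, ← Matrix.range_cons_cons_empty, finrank_span_eq_card (linearIndependent_pair_jt hw),
      Fintype.card_fin]

lemma mem_span_pair_jt_iff {w z : Fin 4 → ℂ} :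
    z ∈ Submodule.span ℂ {w, jt w} ↔ ∃ q : Quaternion ℝ, q • piv w = piv z := by
  rw [Submodule.mem_span_pair]
  constructor
  · rintro ⟨a, b, rfl⟩
    exact ⟨toQ a + toQ b * qJ, (piv_smul_add_smul_jt a b w).symm⟩
  · rintro ⟨q, hq⟩
    obtain ⟨a, b, rfl⟩ := exists_toQ_add_toQ_mul_qJ q
    exact ⟨a, b, piv_injective (by rw [piv_smul_add_smul_jt, hq])⟩

/-- If `W ⊆ ℂ⁴` is a 2-dimensional complex subspace with `j̃(W) = W`, then the projective
line `ℙ(W)` is a fiber of the twistor projection: there is `q ∈ ℍℙ¹` with `ℙ(W) = π⁻¹(q)`. -/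
theorem stmt6 (W : Submodule ℂ (Fin 4 → ℂ)) (hW : Module.finrank ℂ W = 2)
    (hj : jt '' (W : Set (Fin 4 → ℂ)) = (W : Set (Fin 4 → ℂ))) :
    ∃ q : Projectivization (Quaternion ℝ) (Fin 2 → Quaternion ℝ),
      projSet W = twistorProj ⁻¹' {q} := by
  have hW₀ : W ≠ ⊥ := by
    rintro rfl
    simp at hW
  obtain ⟨w, hwW, hw⟩ := Submodule.exists_mem_ne_zero_of_ne_bot hW₀
  have hjW : ∀ z ∈ W, jt z ∈ W := fun z hz => by
    rw [← SetLike.mem_coe, ← hj]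
    exact Set.mem_image_of_mem jt hz
  refine ⟨Projectivization.mk (Quaternion ℝ) (piv w) (piv_ne_zero hw), ?_⟩
  ext x
  change x.rep ∈ W ↔ twistorProj x = _
  rw [twistorProj, Projectivization.mk_eq_mk_iff', ← span_pair_jt_eq hW hjW hwW hw,
    mem_span_pair_jt_iff]
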